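/- arXiv:1202.3183 — 3 statements merged into one kernel-verified Lean document; each statement's English description precedes it below -/
import Mathlib

section
/- Let q > 1 and N real with |N - (q+1)| ≤ 2√q. Then both (complex) roots of the polynomial P(T) = 1 + (N-2)T + q^2 T^2 have absolute value q^{-1}; equivalently, writing P(T) = q^2(T - ω_1)(T - ω_2), one has |ω_1| = |ω_2| = 1/q. -/
/-!
The Hasse bound makes the discriminant `(N - 2)² - 4q²` of the quadratic negative, so its
complex roots are non-real and conjugate to each other. By Vieta the product `z * conj z`
of the two roots is `1 / q²`, i.e. `‖z‖ = 1 / q`.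
-/

open ComplexConjugate

lemma Complex.normSq_eq_div_of_quadratic_eq_zero {a b c : ℝ} (hd : discrim a b c < 0) {z : ℂ}
    (hz : a * (z * z) + b * z + c = 0) : Complex.normSq z = c / a := by
  have ha : a ≠ 0 := by
    rintro rfl
    exact (sq_nonneg b).not_gt (by simpa [discrim] using hd)
  have hz_ne_conj : z - conj z ≠ 0 := by
    rw [sub_ne_zero, Ne, eq_comm, Complex.conj_eq_iff_re]
    intro hre
    refine quadratic_ne_zero_of_discrim_ne_sq (fun s hs => ?_) z.re (by exact_mod_cast hre ▸ hz)
    exact (sq_nonneg s).not_gt (hs ▸ hd)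
  have hconj : a * (conj z * conj z) + b * conj z + c = 0 := by
    simpa using congrArg conj hz
  have hsum : a * (z + conj z) + b = 0 :=
    (mul_eq_zero.mp (by linear_combination hz - hconj :
      (a * (z + conj z) + b) * (z - conj z) = 0)).resolve_right hz_ne_conj
  have hprod : (a : ℂ) * (z * conj z) = c := by linear_combination z * hsum - hz
  rw [Complex.mul_conj] at hprod
  exact eq_div_of_mul_eq ha (by rw [mul_comm]; exact_mod_cast hprod)

lemma discrim_neg_of_abs_sub_le_two_sqrt {q N : ℝ} (hq : 1 < q)
    (hN : |N - (q + 1)| ≤ 2 * Real.sqrt q) : discrim (q ^ 2) (N - 2) 1 < 0 := by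
  set s := Real.sqrt q
  have hs : s ^ 2 = q := Real.sq_sqrt (by linarith)
  have hs1 : 1 < s := by nlinarith [Real.sqrt_nonneg q]
  obtain ⟨hN_lower, hN_upper⟩ := abs_le.mp hN
  -- `N - 2 ≤ 2q - (s - 1)²` and `N - 2 ≥ -2q + (3s + 1)(s - 1)` with `s = √q > 1`
  have h_upper : N - 2 < 2 * q := by nlinarith [sq_pos_of_pos (sub_pos.mpr hs1)]
  have h_lower : -(2 * q) < N - 2 := by
    nlinarith [mul_pos (by linarith : (0 : ℝ) < 3 * s + 1) (sub_pos.mpr hs1)]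
  have : (N - 2) ^ 2 < (2 * q) ^ 2 := sq_lt_sq' h_lower h_upper
  rw [discrim]
  linarith

/-- Riemann Hypothesis for the rank-two pure zeta of an elliptic curve: every
complex root of `1 + (N-2)T + q^2 T^2` has absolute value `1/q`. -/
theorem roots_on_circle_of_hasse (q N : ℝ) (hq : 1 < q)
    (hN : |N - (q + 1)| ≤ 2 * Real.sqrt q) :
    ∀ z : ℂ, 1 + (N - 2 : ℂ) * z + (q : ℂ) ^ 2 * z ^ 2 = 0 →
      ‖z‖ = 1 / q := by
  intro z hz
  have hnormSq : Complex.normSq z = 1 / q ^ 2 :=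
    Complex.normSq_eq_div_of_quadratic_eq_zero (discrim_neg_of_abs_sub_le_two_sqrt hq hN)
      (by push_cast; linear_combination hz)
  have hq0 : 0 < q := by linarith
  refine (pow_left_inj₀ (norm_nonneg z) (by positivity) two_ne_zero).mp ?_
  rw [Complex.sq_norm, hnormSq, div_pow, one_pow]
end

section
/- For any real q ≥ 2, the polynomial p(t) = q^2 t^4 + q(q-1) t^3 + (q+1) t + 1 has at least one root t with |t| ≠ q^{-1/2}. -/
/-! The polynomial factors as `(t + 1) (q² t³ - q t² + q t + 1)`, so `t = -1` is a root for every `q`.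
Its absolute value `1` is off the circle `|t| = q^{-1/2}` as soon as `q ≠ 1`. -/

theorem mul_add_one_eq_quartic {R : Type*} [CommRing R] (q z : R) :
    (z + 1) * (q ^ 2 * z ^ 3 - q * z ^ 2 + q * z + 1) =
      q ^ 2 * z ^ 4 + q * (q - 1) * z ^ 3 + (q + 1) * z + 1 := by
  ring

theorem quartic_neg_one_eq_zero {R : Type*} [CommRing R] (q : R) :
    q ^ 2 * (-1) ^ 4 + q * (q - 1) * (-1) ^ 3 + (q + 1) * (-1) + 1 = 0 := by
  rw [← mul_add_one_eq_quartic, neg_add_cancel, zero_mul]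

theorem inv_sqrt_ne_one {q : ℝ} (hq : q ≠ 1) : (Real.sqrt q)⁻¹ ≠ 1 := by
  rwa [Ne, inv_eq_one, Real.sqrt_eq_one]

/-- The essential factor of the numerator of the partial rank-three zeta
`ζ^{12}_{E,3}` has a root off the circle `|t| = q^{-1/2}`:
the Riemann Hypothesis fails for this partial zeta. -/
theorem partial_rank_three_no_RH (q : ℝ) (hq : 2 ≤ q) :
    ∃ z : ℂ,
      (q : ℂ) ^ 2 * z ^ 4 + (q : ℂ) * ((q : ℂ) - 1) * z ^ 3 + ((q : ℂ) + 1) * z + 1 = 0 ∧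
      ‖z‖ ≠ (Real.sqrt q)⁻¹ := by
  refine ⟨-1, quartic_neg_one_eq_zero _, ?_⟩
  rw [norm_neg, norm_one]
  exact (inv_sqrt_ne_one (by linarith)).symm
end

section
/- Let Φ be a root system with Weyl group W, base Δ, longest element w_0, and fix p with Δ_p = Δ \ {α_p}; let w_p be the longest element of the parabolic Weyl group W_p generated by reflections in Δ_p. Define 𝔚_p = {w ∈ W : wΔ_p ⊆ Δ ∪ Φ^-}. Then the map w ↦ w_0 w w_p is an involution of 𝔚_p: it maps 𝔚_p to itself and applying it twice gives the identity. -/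
open scoped RealInnerProductSpace

/-- A (reduced, crystallographic) root system `Φ` in a real inner product
space, together with a chosen base `Δ`. -/
structure RootSystemBase (V : Type*) [NormedAddCommGroup V]
    [InnerProductSpace ℝ V] where
  Φ : Set V
  finite : Φ.Finite
  zero_not_mem : (0 : V) ∉ Φ
  neg_mem : ∀ α ∈ Φ, -α ∈ Φ
  reduced : ∀ α ∈ Φ, ∀ t : ℝ, t • α ∈ Φ → t = 1 ∨ t = -1
  crystallographic : ∀ α ∈ Φ, ∀ β ∈ Φ, ∃ n : ℤ, (n : ℝ) = 2 * ⟪α, β⟫ / ⟪α, α⟫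
  reflect_mem : ∀ α ∈ Φ, ∀ β ∈ Φ, β - (2 * ⟪α, β⟫ / ⟪α, α⟫) • α ∈ Φ
  Δ : Finset V
  base_subset : ↑Δ ⊆ Φ
  base_indep : LinearIndependent ℝ (fun α : Δ => (α : V))
  base_pos_neg : ∀ α ∈ Φ,
    (∃ c : V → ℝ, (∀ β, 0 ≤ c β) ∧ α = ∑ β ∈ Δ, c β • β) ∨
    (∃ c : V → ℝ, (∀ β, 0 ≤ c β) ∧ α = -∑ β ∈ Δ, c β • β)

namespace RootSystemBase

variable {V : Type*} [NormedAddCommGroup V] [InnerProductSpace ℝ V]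
  (R : RootSystemBase V)

/-- The positive roots determined by the base `Δ`. -/
def posRoots : Set V :=
  {α ∈ R.Φ | ∃ c : V → ℝ, (∀ β, 0 ≤ c β) ∧ α = ∑ β ∈ R.Δ, c β • β}

/-- The negative roots determined by the base `Δ`. -/
def negRoots : Set V := {α | -α ∈ R.posRoots}

/-- The pairing `⟨x, α^∨⟩ = 2⟪x, α⟫/⟪α, α⟫` with the coroot `α^∨`. -/
noncomputable def copair (x α : V) : ℝ := 2 * ⟪x, α⟫ / ⟪α, α⟫

/-- The Weyl group: the subgroup of linear automorphisms of `V` generated by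
the reflections `s_α : x ↦ x - ⟨x, α^∨⟩ α` in the roots `α ∈ Φ`. -/
def weylGroup : Subgroup (V ≃ₗ[ℝ] V) :=
  Subgroup.closure
    {w | ∃ α ∈ R.Φ, ∀ x, w x = x - (2 * ⟪α, x⟫ / ⟪α, α⟫) • α}

/-- The length `ℓ(w) = |Φ_w|` where `Φ_w = Φ⁺ ∩ w⁻¹Φ⁻`. -/
noncomputable def length (w : V ≃ₗ[ℝ] V) : ℕ :=
  (R.posRoots ∩ ⇑w ⁻¹' R.negRoots).ncard

/-- `w₀` is a longest element of the Weyl group. -/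
def IsLongest (w₀ : V ≃ₗ[ℝ] V) : Prop :=
  w₀ ∈ R.weylGroup ∧ ∀ w ∈ R.weylGroup, R.length w ≤ R.length w₀

/-- The parabolic root subsystem `Φ_p` generated by `Δ_p = Δ \ {α_p}`:
the roots in the span of `Δ_p`. -/
def paraRoots (αp : V) : Set V :=
  R.Φ ∩ (Submodule.span ℝ (↑R.Δ \ {αp}) : Set V)

/-- The parabolic Weyl group `W_p`, generated by the reflections in `Φ_p`. -/
def paraWeylGroup (αp : V) : Subgroup (V ≃ₗ[ℝ] V) :=
  Subgroup.closure
    {w | ∃ α ∈ R.paraRoots αp, ∀ x, w x = x - (2 * ⟪α, x⟫ / ⟪α, α⟫) • α}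

/-- The length function of the parabolic subsystem `Φ_p`. -/
noncomputable def paraLength (αp : V) (w : V ≃ₗ[ℝ] V) : ℕ :=
  ((R.posRoots ∩ R.paraRoots αp) ∩ ⇑w ⁻¹' (R.negRoots ∩ R.paraRoots αp)).ncard

/-- `w_p` is a longest element of the parabolic Weyl group `W_p`. -/
def IsParaLongest (αp : V) (wp : V ≃ₗ[ℝ] V) : Prop :=
  wp ∈ R.paraWeylGroup αp ∧
    ∀ w ∈ R.paraWeylGroup αp, R.paraLength αp w ≤ R.paraLength αp wp

end RootSystemBase


/-!
A longest element `w₀` sends every positive root to a negative one: otherwise some simple root `δ`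
has `w₀ δ > 0`, and then `w₀ s_δ` is longer. Hence `w₀²` preserves the positive roots, and the
deletion condition shows that only the identity of `W` does so: `w₀² = 1`. Moreover `-w₀` permutes
`Δ`, because `s_{-w₀ δ} = w₀ s_δ w₀` sends only one positive root to a negative one. The same
applies to `w_p` in the parabolic subsystem `Φ_p`, a root system with base `Δ_p`.

For `α ∈ Δ_p` put `β = -w_p α ∈ Δ_p`; then `(w₀ w w_p) α = w₀ (-(w β))` lies in `Δ` when `w β ∈ Δ`
and in `Φ⁻` when `w β ∈ Φ⁻`. Finally `w₀ (w₀ w w_p) w_p = w` because `w₀² = w_p² = 1`.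
-/
namespace RootSystemBase

variable {V : Type*} [NormedAddCommGroup V] [InnerProductSpace ℝ V]

section Reflection

lemma reflection_formula_involutive (α : V) :
    Function.Involutive fun x : V => x - (2 * ⟪α, x⟫ / ⟪α, α⟫) • α := by
  intro x
  rcases eq_or_ne α 0 with rfl | hα
  · simp
  have hαα : ⟪α, α⟫ ≠ 0 := inner_self_ne_zero.2 hα
  have hcoeff : 2 * (⟪α, x⟫ - 2 * ⟪α, x⟫ / ⟪α, α⟫ * ⟪α, α⟫) / ⟪α, α⟫ = -(2 * ⟪α, x⟫ / ⟪α, α⟫) := by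
    field_simp
    ring
  simp only [inner_sub_right, inner_smul_right, hcoeff, neg_smul, sub_neg_eq_add, sub_add_cancel]

noncomputable def rootReflection (α : V) : V ≃ₗ[ℝ] V :=
  LinearEquiv.ofInvolutive
    { toFun := fun x => x - (2 * ⟪α, x⟫ / ⟪α, α⟫) • α
      map_add' := fun x y => by simp only [inner_add_right, add_div, mul_add, add_smul]; abel
      map_smul' := fun c x => by
        simp only [inner_smul_right, RingHom.id_apply, smul_sub, smul_smul]
        ring_nf }
    (reflection_formula_involutive α)

@[simp] lemma rootReflection_apply (α x : V) :
    rootReflection α x = x - (2 * ⟪α, x⟫ / ⟪α, α⟫) • α := rfl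

lemma rootReflection_involutive (α : V) : Function.Involutive (rootReflection α) :=
  reflection_formula_involutive α

@[simp] lemma rootReflection_mul_self (α : V) : rootReflection α * rootReflection α = 1 :=
  LinearEquiv.ext (rootReflection_involutive α)

@[simp] lemma rootReflection_inv (α : V) : (rootReflection α)⁻¹ = rootReflection α :=
  inv_eq_of_mul_eq_one_right (rootReflection_mul_self α)

@[simp] lemma rootReflection_neg (α : V) : rootReflection (-α) = rootReflection α := by
  ext x
  simp only [rootReflection_apply, inner_neg_left, inner_neg_right, neg_neg, smul_neg, mul_neg,
    neg_div, neg_smul, sub_eq_add_neg]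

lemma rootReflection_self {α : V} (hα : α ≠ 0) : rootReflection α α = -α := by
  rw [rootReflection_apply, mul_div_assoc, div_self (inner_self_ne_zero.2 hα), mul_one, two_smul]
  abel

lemma inner_rootReflection (α x y : V) :
    ⟪rootReflection α x, rootReflection α y⟫ = ⟪x, y⟫ := by
  rcases eq_or_ne α 0 with rfl | hα
  · simp
  have hαα : ⟪α, α⟫ ≠ 0 := inner_self_ne_zero.2 hα
  simp only [rootReflection_apply, inner_sub_left, inner_sub_right, inner_smul_left,
    inner_smul_right, RCLike.conj_to_real, real_inner_comm x α]
  field_simp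
  ring

lemma mul_rootReflection_mul_inv {w : V ≃ₗ[ℝ] V} (hw : ∀ x y, ⟪w x, w y⟫ = ⟪x, y⟫) (α : V) :
    w * rootReflection α * w⁻¹ = rootReflection (w α) := by
  ext x
  obtain ⟨y, rfl⟩ := w.surjective x
  have hy : w⁻¹ (w y) = y := w.symm_apply_apply y
  rw [LinearEquiv.mul_apply, LinearEquiv.mul_apply, hy]
  simp only [rootReflection_apply, map_sub, map_smul, hw]

end Reflection

variable (R : RootSystemBase V)

section Positivity

lemma ne_zero_of_mem {α : V} (hα : α ∈ R.Φ) : α ≠ 0 := fun h => R.zero_not_mem (h ▸ hα)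

lemma inner_self_pos {α : V} (hα : α ∈ R.Φ) : 0 < ⟪α, α⟫ :=
  real_inner_self_pos.2 (R.ne_zero_of_mem hα)

-- `posRoots` is definitionally `Φ ∩ cone`.
def cone : PointedCone ℝ V where
  carrier := {x | ∃ c : V → ℝ, (∀ β, 0 ≤ c β) ∧ x = ∑ β ∈ R.Δ, c β • β}
  add_mem' := by
    rintro _ _ ⟨c, hc, rfl⟩ ⟨d, hd, rfl⟩
    exact ⟨c + d, fun β => add_nonneg (hc β) (hd β), by
      simp only [Pi.add_apply, add_smul, Finset.sum_add_distrib]⟩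
  zero_mem' := ⟨0, fun _ => le_rfl, by simp⟩
  smul_mem' := by
    rintro ⟨t, ht⟩ _ ⟨c, hc, rfl⟩
    exact ⟨t • c, fun β => mul_nonneg ht (hc β), by
      simp only [Nonneg.mk_smul, Finset.smul_sum, smul_smul, Pi.smul_apply, smul_eq_mul]⟩

lemma mem_negRoots {α : V} : α ∈ R.negRoots ↔ -α ∈ R.posRoots := Iff.rfl

@[simp] lemma neg_mem_negRoots_iff {α : V} : -α ∈ R.negRoots ↔ α ∈ R.posRoots := by
  rw [mem_negRoots, neg_neg]

open scoped Classical in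
lemma smul_eq_sum_ite (t : ℝ) {δ : V} (hδ : δ ∈ R.Δ) :
    t • δ = ∑ η ∈ R.Δ, (if η = δ then t else 0) • η := by
  simp [ite_smul, Finset.sum_ite_eq', hδ]

lemma coeff_eq_of_sum_eq {c d : V → ℝ} (h : ∑ β ∈ R.Δ, c β • β = ∑ β ∈ R.Δ, d β • β)
    {β : V} (hβ : β ∈ R.Δ) : c β = d β := by
  have hzero : ∑ η : R.Δ, (c η - d η) • (η : V) = 0 := by
    rw [Finset.sum_coe_sort R.Δ fun η => (c η - d η) • η]
    simp only [sub_smul, Finset.sum_sub_distrib, h, sub_self]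
  exact sub_eq_zero.1 (Fintype.linearIndependent_iff.1 R.base_indep _ hzero ⟨β, hβ⟩)

lemma mem_posRoots_or_mem_negRoots {α : V} (hα : α ∈ R.Φ) :
    α ∈ R.posRoots ∨ α ∈ R.negRoots := by
  rcases R.base_pos_neg α hα with ⟨c, hc, hαc⟩ | ⟨c, hc, hαc⟩
  · exact Or.inl ⟨hα, c, hc, hαc⟩
  · exact Or.inr ⟨R.neg_mem α hα, c, hc, by rw [hαc, neg_neg]⟩

lemma notMem_negRoots_of_mem_posRoots {α : V} (hpos : α ∈ R.posRoots) : α ∉ R.negRoots := by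
  obtain ⟨hα, c, hc, hαc⟩ := hpos
  rintro ⟨-, d, hd, hαd⟩
  refine R.ne_zero_of_mem hα ?_
  have hcd : ∀ β ∈ R.Δ, c β + d β = 0 := fun β hβ =>
    R.coeff_eq_of_sum_eq (c := c + d) (d := 0) (by
      simp only [Pi.add_apply, add_smul, Finset.sum_add_distrib, ← hαc, ← hαd, Pi.zero_apply,
        zero_smul, Finset.sum_const_zero, add_neg_cancel]) hβ
  rw [hαc]
  exact Finset.sum_eq_zero fun β hβ => by
    rw [le_antisymm (by linarith [hcd β hβ, hd β]) (hc β), zero_smul]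

lemma base_subset_posRoots : ↑R.Δ ⊆ R.posRoots := by
  classical
  exact fun δ hδ => ⟨R.base_subset hδ, fun η => if η = δ then 1 else 0,
    fun η => by dsimp only; split_ifs <;> norm_num, by rw [← R.smul_eq_sum_ite 1 hδ, one_smul]⟩

/-- Simple roots are extremal rays of the cone spanned by the positive roots. -/
lemma eq_of_smul_eq_add {δ β γ : V} {t : ℝ} (hδ : δ ∈ R.Δ) (hβ : β ∈ R.posRoots)
    (hγ : γ ∈ R.cone) (h : t • δ = β + γ) : β = δ := by
  classical
  obtain ⟨hβΦ, b, hb, hβb⟩ := hβ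
  obtain ⟨g, hg, hγg⟩ := hγ
  have hcoeff : ∀ η ∈ R.Δ, b η + g η = if η = δ then t else 0 := fun η hη =>
    R.coeff_eq_of_sum_eq (c := b + g) (by
      rw [← R.smul_eq_sum_ite t hδ, h, hβb, hγg]
      simp only [Pi.add_apply, add_smul, Finset.sum_add_distrib]) hη
  have hβδ : β = b δ • δ := by
    rw [hβb]
    refine Finset.sum_eq_single_of_mem δ hδ fun η hη hne => ?_
    have := hcoeff η hη
    rw [if_neg hne] at this
    rw [le_antisymm (by linarith [hg η]) (hb η), zero_smul]
  rcases R.reduced δ (R.base_subset hδ) (b δ) (hβδ ▸ hβΦ) with h1 | h1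
  · rw [hβδ, h1, one_smul]
  · linarith [hb δ]

lemma rootReflection_mem_posRoots {δ β : V} (hδ : δ ∈ R.Δ) (hβ : β ∈ R.posRoots)
    (hne : β ≠ δ) : rootReflection δ β ∈ R.posRoots := by
  have hsβ : rootReflection δ β ∈ R.Φ := R.reflect_mem δ (R.base_subset hδ) β hβ.1
  refine (R.mem_posRoots_or_mem_negRoots hsβ).resolve_right fun hneg => hne ?_
  refine R.eq_of_smul_eq_add hδ hβ hneg.2 (t := 2 * ⟪δ, β⟫ / ⟪δ, δ⟫) ?_
  rw [rootReflection_apply]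
  abel

lemma exists_base_inner_pos {α : V} (hα : α ∈ R.posRoots) : ∃ δ ∈ R.Δ, 0 < ⟪δ, α⟫ := by
  obtain ⟨hαΦ, c, hc, hαc⟩ := hα
  by_contra! hle
  have hαα : ⟪α, α⟫ = ∑ δ ∈ R.Δ, c δ * ⟪δ, α⟫ := calc
    ⟪α, α⟫ = ⟪∑ δ ∈ R.Δ, c δ • δ, α⟫ := by rw [← hαc]
    _ = ∑ δ ∈ R.Δ, c δ * ⟪δ, α⟫ := by simp only [sum_inner, real_inner_smul_left]
  have := R.inner_self_pos hαΦ
  have : ∑ δ ∈ R.Δ, c δ * ⟪δ, α⟫ ≤ 0 :=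
    Finset.sum_nonpos fun δ hδ => mul_nonpos_of_nonneg_of_nonpos (hc δ) (hle δ hδ)
  linarith

lemma mem_base_of_rootReflection_mem_posRoots {μ : V} (hμ : μ ∈ R.posRoots)
    (h : ∀ β ∈ R.posRoots, β ≠ μ → rootReflection μ β ∈ R.posRoots) : μ ∈ R.Δ := by
  obtain ⟨δ, hδ, hδμ⟩ := R.exists_base_inner_pos hμ
  by_cases hμδ : μ = δ
  · rwa [hμδ]
  set k := 2 * ⟪μ, δ⟫ / ⟪μ, μ⟫
  have hk : 0 < k := by
    have := R.inner_self_pos hμ.1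
    rw [real_inner_comm] at hδμ
    positivity
  have hsδ := h δ (R.base_subset_posRoots hδ) (Ne.symm hμδ)
  have hdecomp : k⁻¹ • δ = μ + k⁻¹ • rootReflection μ δ := by
    rw [rootReflection_apply, smul_sub, smul_smul, inv_mul_cancel₀ hk.ne', one_smul]
    abel
  exact (hμδ (R.eq_of_smul_eq_add hδ hμ (R.cone.smul_mem (inv_nonneg.2 hk.le) hsδ.2) hdecomp)).elim

end Positivity

section WeylGroup

lemma weylGroup_eq_closure : R.weylGroup = Subgroup.closure (rootReflection '' R.Φ) := by
  refine congrArg Subgroup.closure (Set.ext fun w => ⟨?_, ?_⟩)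
  · rintro ⟨α, hα, hw⟩
    exact ⟨α, hα, LinearEquiv.ext fun x => (hw x).symm⟩
  · rintro ⟨α, hα, rfl⟩
    exact ⟨α, hα, fun _ => rfl⟩

lemma rootReflection_mem_weylGroup {α : V} (hα : α ∈ R.Φ) : rootReflection α ∈ R.weylGroup := by
  rw [weylGroup_eq_closure]
  exact Subgroup.subset_closure ⟨α, hα, rfl⟩

variable {R}

lemma inner_apply_apply_of_mem_weylGroup {w : V ≃ₗ[ℝ] V} (hw : w ∈ R.weylGroup) (x y : V) :
    ⟪w x, w y⟫ = ⟪x, y⟫ := by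
  rw [weylGroup_eq_closure] at hw
  induction hw using Subgroup.closure_induction'' generalizing x y with
  | mem _ h | inv_mem _ h =>
    obtain ⟨α, -, rfl⟩ := h
    simp only [rootReflection_inv, inner_rootReflection]
  | one => rfl
  | mul u v _ _ hu hv => exact (hu _ _).trans (hv x y)

lemma apply_mem_of_mem_weylGroup {w : V ≃ₗ[ℝ] V} (hw : w ∈ R.weylGroup) {α : V}
    (hα : α ∈ R.Φ) : w α ∈ R.Φ := by
  rw [weylGroup_eq_closure] at hw
  induction hw using Subgroup.closure_induction'' generalizing α with
  | mem _ h | inv_mem _ h =>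
    obtain ⟨β, hβ, rfl⟩ := h
    exact R.reflect_mem β hβ α hα
  | one => exact hα
  | mul u v _ _ hu hv => exact hu (hv hα)

variable (R)

lemma exists_linearMap_base_eq_one : ∃ f : V →ₗ[ℝ] ℝ, ∀ δ ∈ R.Δ, f δ = 1 := by
  classical
  let b := Module.Basis.span R.base_indep
  obtain ⟨f, hf⟩ := LinearMap.exists_extend (∑ i, b.coord i)
  refine ⟨f, fun δ hδ => ?_⟩
  have hbδ : (b ⟨δ, hδ⟩ : V) = δ := by simp [b]
  rw [← hbδ, ← Submodule.subtype_apply, ← LinearMap.comp_apply, hf]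
  simp [Finsupp.single_apply]

lemma rootReflection_mem_closure_base {α : V} (hα : α ∈ R.Φ) :
    rootReflection α ∈ Subgroup.closure (rootReflection '' ↑R.Δ) := by
  set S := Subgroup.closure (rootReflection '' (R.Δ : Set V))
  suffices hpos : ∀ μ ∈ R.posRoots, rootReflection μ ∈ S by
    rcases R.mem_posRoots_or_mem_negRoots hα with h | h
    · exact hpos α h
    · simpa using hpos (-α) h
  obtain ⟨ht, ht_base⟩ := R.exists_linearMap_base_eq_one
  by_contra! hbad
  have hfin : {μ | μ ∈ R.posRoots ∧ rootReflection μ ∉ S}.Finite :=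
    R.finite.subset fun μ hμ => hμ.1.1
  obtain ⟨μ, ⟨hμ, hμS⟩, hmin⟩ := Set.exists_min_image _ ht hfin hbad
  obtain ⟨δ, hδ, hδμ⟩ := R.exists_base_inner_pos hμ
  have hδS : rootReflection δ ∈ S := Subgroup.subset_closure ⟨δ, hδ, rfl⟩
  by_cases hμδ : μ = δ
  · exact hμS (hμδ ▸ hδS)
  -- `s_δ μ = μ - k δ` with `k > 0` is a positive root of smaller height.
  set μ' := rootReflection δ μ
  have hμ' : μ' ∈ R.posRoots := R.rootReflection_mem_posRoots hδ hμ hμδ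
  have hlt : ht μ' < ht μ := by
    have := R.inner_self_pos (R.base_subset hδ)
    simp only [μ', rootReflection_apply, map_sub, map_smul, ht_base δ hδ, smul_eq_mul, mul_one,
      sub_lt_self_iff]
    positivity
  have hμ'S : rootReflection μ' ∈ S := by
    by_contra h
    exact (hmin μ' ⟨hμ', h⟩).not_gt hlt
  have hconj : rootReflection δ * rootReflection μ' * (rootReflection δ)⁻¹ = rootReflection μ := by
    rw [mul_rootReflection_mul_inv (inner_rootReflection δ), rootReflection_involutive]
  exact hμS (hconj ▸ mul_mem (mul_mem hδS hμ'S) (inv_mem hδS))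

lemma exists_word {w : V ≃ₗ[ℝ] V} (hw : w ∈ R.weylGroup) :
    ∃ L : List V, (∀ δ ∈ L, δ ∈ R.Δ) ∧ (L.map rootReflection).prod = w := by
  have hle : R.weylGroup ≤ Subgroup.closure (rootReflection '' ↑R.Δ) := by
    rw [weylGroup_eq_closure, Subgroup.closure_le]
    rintro _ ⟨α, hα, rfl⟩
    exact R.rootReflection_mem_closure_base hα
  replace hw := hle hw
  clear hle
  induction hw using Subgroup.closure_induction'' with
  | mem _ h | inv_mem _ h =>
    obtain ⟨δ, hδ, rfl⟩ := h
    exact ⟨[δ], by simpa using hδ, by simp⟩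
  | one => exact ⟨[], by simp, rfl⟩
  | mul u v _ _ hu hv =>
    obtain ⟨L, hL, rfl⟩ := hu
    obtain ⟨M, hM, rfl⟩ := hv
    exact ⟨L ++ M, by simpa [or_imp, forall_and] using And.intro hL hM, by simp⟩

lemma word_mem_weylGroup {L : List V} (hL : ∀ δ ∈ L, δ ∈ R.Δ) :
    (L.map rootReflection).prod ∈ R.weylGroup :=
  R.weylGroup.list_prod_mem fun _ h => by
    obtain ⟨δ, hδ, rfl⟩ := List.mem_map.1 h
    exact R.rootReflection_mem_weylGroup (R.base_subset (hL δ hδ))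

/-- The deletion condition for words in the simple reflections. -/
lemma exists_word_eq_mul_rootReflection {δ : V} (hδ : δ ∈ R.Δ) {L : List V}
    (hL : ∀ γ ∈ L, γ ∈ R.Δ) (hneg : (L.map rootReflection).prod δ ∈ R.negRoots) :
    ∃ N : List V, (∀ γ ∈ N, γ ∈ R.Δ) ∧ N.length + 1 = L.length ∧
      (N.map rootReflection).prod = (L.map rootReflection).prod * rootReflection δ := by
  induction L with
  | nil =>
    exact absurd hneg (R.notMem_negRoots_of_mem_posRoots (R.base_subset_posRoots hδ))
  | cons γ M ih =>
    simp only [List.mem_cons, forall_eq_or_imp] at hL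
    obtain ⟨hγ, hM⟩ := hL
    set u := (M.map rootReflection).prod
    have hu : u ∈ R.weylGroup := R.word_mem_weylGroup hM
    rw [List.map_cons, List.prod_cons] at hneg ⊢
    rcases R.mem_posRoots_or_mem_negRoots
      (apply_mem_of_mem_weylGroup hu (R.base_subset hδ)) with hpos | hneg'
    · -- `s_γ` makes the positive root `u δ` negative, so `u δ = γ`.
      have huδ : u δ = γ := by
        by_contra hne
        exact R.notMem_negRoots_of_mem_posRoots (R.rootReflection_mem_posRoots hγ hpos hne) hneg
      refine ⟨M, hM, rfl, ?_⟩
      rw [← huδ, ← mul_rootReflection_mul_inv (inner_apply_apply_of_mem_weylGroup hu)]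
      change u = u * rootReflection δ * u⁻¹ * u * rootReflection δ
      simp [mul_assoc]
    · obtain ⟨N, hN, hlen, hprod⟩ := ih hM hneg'
      refine ⟨γ :: N, ?_, by simp [hlen], by rw [List.map_cons, List.prod_cons, hprod, mul_assoc]⟩
      simpa using ⟨hγ, hN⟩

lemma eq_one_of_forall_posRoots {w : V ≃ₗ[ℝ] V} (hw : w ∈ R.weylGroup)
    (h : ∀ α ∈ R.posRoots, w α ∈ R.posRoots) : w = 1 := by
  obtain ⟨L, hL, rfl⟩ := R.exists_word hw
  clear hw
  induction hlen : L.length using Nat.strong_induction_on generalizing L with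
  | _ n ih =>
    rcases L.eq_nil_or_concat' with rfl | ⟨M, δ, rfl⟩
    · rfl
    simp only [List.mem_append, List.mem_singleton, or_imp, forall_and, forall_eq] at hL
    obtain ⟨hM, hδ⟩ := hL
    have hprod : ((M ++ [δ]).map rootReflection).prod =
        (M.map rootReflection).prod * rootReflection δ := by simp
    have hneg : (M.map rootReflection).prod δ ∈ R.negRoots := by
      have := h δ (R.base_subset_posRoots hδ)
      rwa [hprod, LinearEquiv.mul_apply,
        rootReflection_self (R.ne_zero_of_mem (R.base_subset hδ)), map_neg] at this
    obtain ⟨N, hN, hNlen, hN_eq⟩ := R.exists_word_eq_mul_rootReflection hδ hM hneg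
    rw [hprod, ← hN_eq] at h ⊢
    rw [List.length_append, List.length_singleton] at hlen
    exact ih N.length (by omega) N hN h rfl

end WeylGroup

section Longest

lemma length_lt_length_mul_rootReflection {w : V ≃ₗ[ℝ] V} {δ : V} (hδ : δ ∈ R.Δ)
    (hwδ : w δ ∈ R.posRoots) : R.length w < R.length (w * rootReflection δ) := by
  have hδ0 : δ ≠ 0 := R.ne_zero_of_mem (R.base_subset hδ)
  set A := R.posRoots ∩ ⇑w ⁻¹' R.negRoots
  set B := R.posRoots ∩ ⇑(w * rootReflection δ) ⁻¹' R.negRoots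
  have hδB : δ ∈ B := ⟨R.base_subset_posRoots hδ, by
    rwa [Set.mem_preimage, LinearEquiv.mul_apply, rootReflection_self hδ0, map_neg,
      neg_mem_negRoots_iff]⟩
  have hδA : δ ∉ rootReflection δ '' A := by
    rintro ⟨γ, ⟨hγ, -⟩, hγδ⟩
    rw [(rootReflection_involutive δ).eq_iff.1 hγδ, rootReflection_self hδ0] at hγ
    exact R.notMem_negRoots_of_mem_posRoots hγ ((R.neg_mem_negRoots_iff).2
      (R.base_subset_posRoots hδ))
  have hAB : insert δ (rootReflection δ '' A) ⊆ B := by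
    refine Set.insert_subset hδB ?_
    rintro _ ⟨γ, ⟨hγ, hwγ⟩, rfl⟩
    have hγδ : γ ≠ δ := by
      rintro rfl
      exact R.notMem_negRoots_of_mem_posRoots hwδ hwγ
    refine ⟨R.rootReflection_mem_posRoots hδ hγ hγδ, ?_⟩
    rwa [Set.mem_preimage, LinearEquiv.mul_apply, rootReflection_involutive δ γ]
  have hAfin : A.Finite := R.finite.subset fun β hβ => hβ.1.1
  have := Set.ncard_le_ncard hAB (R.finite.subset fun β hβ => hβ.1.1)
  rwa [Set.ncard_insert_of_notMem hδA (hAfin.image _),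
    Set.ncard_image_of_injective _ (rootReflection δ).injective] at this

namespace IsLongest

variable {R} {w₀ : V ≃ₗ[ℝ] V} (hw₀ : R.IsLongest w₀)
include hw₀

lemma apply_mem_negRoots {α : V} (hα : α ∈ R.posRoots) : w₀ α ∈ R.negRoots := by
  have hbase : ∀ δ ∈ R.Δ, -w₀ δ ∈ R.cone := fun δ hδ => by
    refine ((R.mem_posRoots_or_mem_negRoots
      (apply_mem_of_mem_weylGroup hw₀.1 (R.base_subset hδ))).resolve_left fun hpos => ?_).2
    have hmem := mul_mem hw₀.1 (R.rootReflection_mem_weylGroup (R.base_subset hδ))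
    exact (hw₀.2 _ hmem).not_gt (R.length_lt_length_mul_rootReflection hδ hpos)
  obtain ⟨hαΦ, c, hc, rfl⟩ := hα
  refine ⟨R.neg_mem _ (apply_mem_of_mem_weylGroup hw₀.1 hαΦ), ?_⟩
  simp only [map_sum, map_smul, ← Finset.sum_neg_distrib, ← smul_neg]
  exact Submodule.sum_mem _ fun δ hδ => R.cone.smul_mem (hc δ) (hbase δ hδ)

lemma neg_apply_mem_posRoots {α : V} (hα : α ∈ R.posRoots) : -w₀ α ∈ R.posRoots :=
  hw₀.apply_mem_negRoots hα

lemma mul_self : w₀ * w₀ = 1 :=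
  R.eq_one_of_forall_posRoots (mul_mem hw₀.1 hw₀.1) fun α hα => by
    simpa using hw₀.apply_mem_negRoots (hw₀.neg_apply_mem_posRoots hα)

lemma neg_apply_mem_base {δ : V} (hδ : δ ∈ R.Δ) : -w₀ δ ∈ R.Δ := by
  have hinv : w₀⁻¹ = w₀ := inv_eq_of_mul_eq_one_right hw₀.mul_self
  have hw₀w₀ : ∀ x, w₀ (w₀ x) = x := fun x => by
    rw [← LinearEquiv.mul_apply, hw₀.mul_self]
    rfl
  refine R.mem_base_of_rootReflection_mem_posRoots
    (hw₀.neg_apply_mem_posRoots (R.base_subset_posRoots hδ)) fun β hβ hne => ?_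
  -- `s_{w₀ δ} = w₀ s_δ w₀`, and `s_δ` permutes the positive roots other than `δ`.
  have hβδ : -w₀ β ≠ δ := fun h => hne (by rw [← h, map_neg, hw₀w₀, neg_neg])
  have hpos := R.rootReflection_mem_posRoots hδ (hw₀.neg_apply_mem_posRoots hβ) hβδ
  rw [rootReflection_neg, ← mul_rootReflection_mul_inv
    (inner_apply_apply_of_mem_weylGroup hw₀.1), hinv, LinearEquiv.mul_apply,
    LinearEquiv.mul_apply]
  have := hw₀.apply_mem_negRoots hpos
  rwa [map_neg, map_neg, neg_mem_negRoots_iff] at this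

lemma apply_neg_mem_base_union_negRoots {x : V} (hx : x ∈ ↑R.Δ ∪ R.negRoots) :
    w₀ (-x) ∈ ↑R.Δ ∪ R.negRoots := by
  rcases hx with hx | hx
  · exact Or.inl (by rw [map_neg]; exact hw₀.neg_apply_mem_base hx)
  · exact Or.inr (hw₀.apply_mem_negRoots hx)

end IsLongest

end Longest

section Restrict

lemma sum_eq_sum_of_mem_span {S : Finset V} (hS : S ⊆ R.Δ) {c : V → ℝ} {x : V}
    (hx : x = ∑ β ∈ R.Δ, c β • β) (hspan : x ∈ Submodule.span ℝ (S : Set V)) :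
    x = ∑ β ∈ S, c β • β := by
  obtain ⟨f, hfS, hf⟩ := Submodule.mem_span_finset.1 hspan
  have hf0 : ∀ β ∉ S, f β = 0 := fun β hβ => Function.notMem_support.1 (mt (@hfS β) hβ)
  have hfΔ : x = ∑ β ∈ R.Δ, f β • β := by
    rw [← hf, Finset.sum_subset hS fun β _ hβ => by rw [hf0 β hβ, zero_smul]]
  rw [hx]
  refine (Finset.sum_subset hS fun β hβ hβS => ?_).symm
  rw [R.coeff_eq_of_sum_eq (hx.symm.trans hfΔ) hβ, hf0 β hβS, zero_smul]

def restrict (S : Finset V) (hS : S ⊆ R.Δ) : RootSystemBase V where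
  Φ := R.Φ ∩ Submodule.span ℝ (S : Set V)
  finite := R.finite.subset Set.inter_subset_left
  zero_not_mem h := R.zero_not_mem h.1
  neg_mem α hα := ⟨R.neg_mem α hα.1, Submodule.neg_mem _ hα.2⟩
  reduced α hα t ht := R.reduced α hα.1 t ht.1
  crystallographic α hα β hβ := R.crystallographic α hα.1 β hβ.1
  reflect_mem α hα β hβ := ⟨R.reflect_mem α hα.1 β hβ.1, sub_mem hβ.2 (Submodule.smul_mem _ _ hα.2)⟩
  Δ := S
  base_subset δ hδ := ⟨R.base_subset (hS hδ), Submodule.subset_span hδ⟩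
  base_indep := R.base_indep.comp (fun δ : S => (⟨δ, hS δ.2⟩ : R.Δ))
    fun _ _ h => Subtype.ext (Subtype.mk.inj h)
  base_pos_neg α hα := by
    rcases R.base_pos_neg α hα.1 with ⟨c, hc, hαc⟩ | ⟨c, hc, hαc⟩
    · exact Or.inl ⟨c, hc, R.sum_eq_sum_of_mem_span hS hαc hα.2⟩
    · refine Or.inr ⟨c, hc, ?_⟩
      rw [← R.sum_eq_sum_of_mem_span hS (x := -α) (by rw [hαc, neg_neg])
        (Submodule.neg_mem _ hα.2), neg_neg]

variable {S : Finset V} (hS : S ⊆ R.Δ)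

lemma restrict_posRoots : (R.restrict S hS).posRoots = R.posRoots ∩ (R.restrict S hS).Φ := by
  classical
  ext α
  constructor
  · rintro ⟨hα, c, hc, hαc⟩
    refine ⟨⟨hα.1, fun β => if β ∈ S then c β else 0, fun β => ?_, ?_⟩, hα⟩
    · dsimp only
      split_ifs
      exacts [hc β, le_rfl]
    · rw [hαc, ← Finset.sum_subset hS fun β _ hβ => by simp [hβ]]
      exact Finset.sum_congr rfl fun β hβ => by simp [hβ]
  · rintro ⟨⟨-, c, hc, hαc⟩, hα⟩
    exact ⟨hα, c, hc, R.sum_eq_sum_of_mem_span hS hαc hα.2⟩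

lemma restrict_negRoots : (R.restrict S hS).negRoots = R.negRoots ∩ (R.restrict S hS).Φ := by
  ext α
  have hneg : -α ∈ (R.restrict S hS).Φ ↔ α ∈ (R.restrict S hS).Φ :=
    ⟨fun h => neg_neg α ▸ (R.restrict S hS).neg_mem _ h, (R.restrict S hS).neg_mem α⟩
  rw [mem_negRoots, restrict_posRoots, Set.mem_inter_iff, hneg]
  rfl

open scoped Classical in
noncomputable def parabolic (αp : V) : RootSystemBase V :=
  R.restrict (R.Δ.erase αp) (R.Δ.erase_subset αp)

variable (αp : V)

lemma coe_parabolic_Δ : ((R.parabolic αp).Δ : Set V) = ↑R.Δ \ {αp} := by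
  classical
  exact Finset.coe_erase _ _

lemma parabolic_Φ : (R.parabolic αp).Φ = R.paraRoots αp := by
  rw [paraRoots, ← coe_parabolic_Δ]
  rfl

lemma parabolic_weylGroup : (R.parabolic αp).weylGroup = R.paraWeylGroup αp := by
  rw [weylGroup, paraWeylGroup, parabolic_Φ]

lemma parabolic_length (w : V ≃ₗ[ℝ] V) : (R.parabolic αp).length w = R.paraLength αp w := by
  rw [length, paraLength, parabolic, restrict_posRoots, restrict_negRoots, ← parabolic,
    parabolic_Φ]

lemma paraWeylGroup_le_weylGroup : R.paraWeylGroup αp ≤ R.weylGroup :=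
  Subgroup.closure_mono fun _ ⟨α, hα, hw⟩ => ⟨α, hα.1, hw⟩

variable {R αp}

lemma IsParaLongest.isLongest_parabolic {wp : V ≃ₗ[ℝ] V} (hwp : R.IsParaLongest αp wp) :
    (R.parabolic αp).IsLongest wp := by
  refine ⟨(R.parabolic_weylGroup αp).symm ▸ hwp.1, fun w hw => ?_⟩
  rw [parabolic_length, parabolic_length]
  exact hwp.2 w (R.parabolic_weylGroup αp ▸ hw)

end Restrict

end RootSystemBase

open RootSystemBase in
theorem frakW_involution_general {V : Type*} [NormedAddCommGroup V]
    [InnerProductSpace ℝ V] (R : RootSystemBase V) (αp : V)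
    (w₀ wp : V ≃ₗ[ℝ] V) (hw₀ : R.IsLongest w₀) (hwp : R.IsParaLongest αp wp) :
    ∀ w : V ≃ₗ[ℝ] V,
      w ∈ R.weylGroup → (∀ α ∈ (↑R.Δ \ {αp} : Set V), w α ∈ ↑R.Δ ∪ R.negRoots) →
      (w₀ * w * wp ∈ R.weylGroup ∧
        (∀ α ∈ (↑R.Δ \ {αp} : Set V), (w₀ * w * wp) α ∈ ↑R.Δ ∪ R.negRoots)) ∧
      w₀ * (w₀ * w * wp) * wp = w := by
  intro w hw hwΔp
  have hwp' := hwp.isLongest_parabolic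
  refine ⟨⟨mul_mem (mul_mem hw₀.1 hw) (R.paraWeylGroup_le_weylGroup αp hwp.1), fun α hα => ?_⟩, ?_⟩
  · have hβ : -wp α ∈ (↑R.Δ \ {αp} : Set V) := by
      rw [← coe_parabolic_Δ] at hα ⊢
      exact hwp'.neg_apply_mem_base hα
    simpa using hw₀.apply_neg_mem_base_union_negRoots (hwΔp _ hβ)
  · calc w₀ * (w₀ * w * wp) * wp = (w₀ * w₀) * w * (wp * wp) := by group
      _ = w := by rw [hw₀.mul_self, hwp'.mul_self, one_mul, mul_one]

open RootSystemBase in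
/-- The map `w ↦ w₀ w w_p` is an involution of
`𝔚_p = {w ∈ W : wΔ_p ⊆ Δ ∪ Φ⁻}`. -/
theorem frakW_involution {V : Type*} [NormedAddCommGroup V]
    [InnerProductSpace ℝ V] (R : RootSystemBase V) (αp : V) (hαp : αp ∈ R.Δ)
    (w₀ wp : V ≃ₗ[ℝ] V) (hw₀ : R.IsLongest w₀) (hwp : R.IsParaLongest αp wp) :
    ∀ w : V ≃ₗ[ℝ] V,
      w ∈ R.weylGroup → (∀ α ∈ (↑R.Δ \ {αp} : Set V), w α ∈ ↑R.Δ ∪ R.negRoots) →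
      (w₀ * w * wp ∈ R.weylGroup ∧
        (∀ α ∈ (↑R.Δ \ {αp} : Set V), (w₀ * w * wp) α ∈ ↑R.Δ ∪ R.negRoots)) ∧
      w₀ * (w₀ * w * wp) * wp = w :=
  frakW_involution_general R αp w₀ wp hw₀ hwp
end
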